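/- arXiv:2303.09198 — 3 statements merged into one kernel-verified Lean document; each statement's English description precedes it below -/
import Mathlib

section
/- Let 1 < α < 2 and let f_1(u,v,w) = min(uv,1)·min(vw,1)·min(uw,1) (i.e., the function f_n with n = 1 and μ = 1). Then the integral ∫_0^∞ ∫_0^∞ ∫_0^∞ f_1(u,v,w) u^{−α−1} v^{−α−1} w^{−α−1} du dv dw is finite. -/
/-!
Substituting `u = eˣ, v = eʸ, w = eᶻ`, the integrand times the Jacobian `e^{x+y+z}` becomes
`h(x+y) h(y+z) h(x+z)` with `h = logKernel α`, since `(uvw)^{-α} = (uv·vw·uw)^{-α/2}`.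
The linear change of variables `(x+y, y+z, x+z)` has Jacobian `2`, so the integral equals
`(∫ h)³ / 2`, and `∫ h` is finite because `0 < α/2 < 1`.
-/

open MeasureTheory Real Set
open scoped ENNReal

noncomputable def logKernel (α t : ℝ) : ℝ := exp (min t 0 - α / 2 * t)

lemma lintegral_Ioi_eq_lintegral_exp (g : ℝ → ℝ≥0∞) :
    ∫⁻ u in Ioi 0, g u = ∫⁻ x, ENNReal.ofReal (exp x) * g (exp x) := by
  have := lintegral_image_eq_lintegral_abs_deriv_mul MeasurableSet.univ
    (fun x _ => (hasDerivAt_exp x).hasDerivWithinAt) exp_injective.injOn g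
  simpa [image_univ, range_exp, abs_of_pos (exp_pos _)] using this

lemma lintegral_Ioi_lintegral_Ioi_lintegral_Ioi_eq (F : ℝ → ℝ → ℝ → ℝ≥0∞) :
    ∫⁻ u in Ioi 0, ∫⁻ v in Ioi 0, ∫⁻ w in Ioi 0, F u v w
      = ∫⁻ x, ∫⁻ y, ∫⁻ z, ENNReal.ofReal (exp (x + y + z)) * F (exp x) (exp y) (exp z) := by
  simp only [lintegral_Ioi_eq_lintegral_exp, exp_add, ENNReal.ofReal_mul, exp_nonneg, mul_assoc,
    lintegral_const_mul', ENNReal.ofReal_ne_top, ne_eq, not_false_eq_true]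

lemma lintegral_comp_mul_left (h : ℝ → ℝ≥0∞) (hh : Measurable h) {c : ℝ} (hc : c ≠ 0) :
    ∫⁻ x, h (c * x) = ENNReal.ofReal |c⁻¹| * ∫⁻ x, h x := by
  rw [← lintegral_map hh (measurable_const_mul c), Real.map_volume_mul_left hc,
    lintegral_smul_measure, smul_eq_mul]

lemma lintegral_lintegral_lintegral_mul_add (h : ℝ → ℝ≥0∞) (hh : Measurable h) :
    ∫⁻ x, ∫⁻ y, ∫⁻ z, h (x + y) * h (y + z) * h (x + z) = 2⁻¹ * (∫⁻ t, h t) ^ 3 := by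
  have translate : ∀ x, ∫⁻ y, ∫⁻ z, h (x + y) * h (y + z) * h (x + z)
      = ∫⁻ y, ∫⁻ z, h y * h z * h (y + z + -2 * x) := by
    intro x
    rw [← lintegral_sub_right_eq_self _ x]
    refine lintegral_congr fun y => ?_
    rw [← lintegral_sub_right_eq_self _ x]
    refine lintegral_congr fun z => ?_
    ring_nf
  have scale : ∀ a, ∫⁻ x, h (a + -2 * x) = 2⁻¹ * ∫⁻ t, h t := by
    intro a
    rw [lintegral_comp_mul_left (fun t => h (a + t)) (by fun_prop) (by norm_num),
      lintegral_add_left_eq_self h a, show |(-2 : ℝ)⁻¹| = 2⁻¹ by norm_num,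
      ENNReal.ofReal_inv_of_pos two_pos, ENNReal.ofReal_ofNat]
  have hF : Measurable fun p : (ℝ × ℝ) × ℝ =>
      h p.1.2 * h p.2 * h (p.1.2 + p.2 + -2 * p.1.1) := by
    fun_prop
  set I := ∫⁻ t, h t
  calc ∫⁻ x, ∫⁻ y, ∫⁻ z, h (x + y) * h (y + z) * h (x + z)
      = ∫⁻ x, ∫⁻ y, ∫⁻ z, h y * h z * h (y + z + -2 * x) := lintegral_congr translate
    _ = ∫⁻ y, ∫⁻ z, ∫⁻ x, h y * h z * h (y + z + -2 * x) := by
        rw [lintegral_lintegral_swap hF.lintegral_prod_right'.aemeasurable]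
        refine lintegral_congr fun y => lintegral_lintegral_swap ?_
        exact (hF.comp (by fun_prop : Measurable fun p : ℝ × ℝ => ((p.1, y), p.2))).aemeasurable
    _ = ∫⁻ y, ∫⁻ z, h y * h z * (2⁻¹ * I) := by
        refine lintegral_congr fun y => lintegral_congr fun z => ?_
        rw [lintegral_const_mul _ (by fun_prop : Measurable fun x => h (y + z + -2 * x)), scale]
    _ = ∫⁻ y, h y * (I * (2⁻¹ * I)) := by
        refine lintegral_congr fun y => ?_
        rw [lintegral_mul_const _ (by fun_prop), lintegral_const_mul _ hh, mul_assoc]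
    _ = 2⁻¹ * I ^ 3 := by
        rw [lintegral_mul_const _ hh]
        ring

lemma min_exp_one (a : ℝ) : min (exp a) 1 = exp (min a 0) := by
  rw [← exp_zero, exp_monotone.map_min]

lemma exp_add_add_mul_integrand_eq_logKernel (α x y z : ℝ) :
    exp (x + y + z) * (min (exp x * exp y) 1 * min (exp y * exp z) 1 * min (exp x * exp z) 1 *
      exp x ^ (-α - 1) * exp y ^ (-α - 1) * exp z ^ (-α - 1))
    = logKernel α (x + y) * logKernel α (y + z) * logKernel α (x + z) := by
  simp only [logKernel, ← exp_add, ← exp_mul, min_exp_one]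
  congr 1
  ring

lemma lintegral_ofReal_logKernel_lt_top {α : ℝ} (h0 : 0 < α) (h2 : α < 2) :
    ∫⁻ t, ENNReal.ofReal (logKernel α t) < ⊤ := by
  rw [← setLIntegral_univ, ← Iic_union_Ioi (a := (0 : ℝ)),
    lintegral_union measurableSet_Ioi (Iic_disjoint_Ioi le_rfl)]
  refine ENNReal.add_lt_top.2 ⟨?_, ?_⟩
  · calc ∫⁻ t in Iic 0, ENNReal.ofReal (logKernel α t)
        ≤ ∫⁻ t in Iic 0, ENNReal.ofReal (exp ((1 - α / 2) * t)) :=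
          lintegral_mono fun t => ENNReal.ofReal_le_ofReal <| exp_le_exp.2 <| by
            nlinarith [min_le_left t 0]
      _ < ⊤ := (integrableOn_exp_mul_Iic (by linarith) 0).lintegral_lt_top
  · calc ∫⁻ t in Ioi 0, ENNReal.ofReal (logKernel α t)
        ≤ ∫⁻ t in Ioi 0, ENNReal.ofReal (exp (-(α / 2) * t)) :=
          lintegral_mono fun t => ENNReal.ofReal_le_ofReal <| exp_le_exp.2 <| by
            nlinarith [min_le_right t 0]
      _ < ⊤ := (integrableOn_exp_mul_Ioi (by linarith) 0).lintegral_lt_top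

/-- For `1 < α < 2`, the integral
`∫∫∫ min(uv,1) min(vw,1) min(uw,1) u^{-α-1} v^{-α-1} w^{-α-1} du dv dw` over
`(0,∞)³` is finite. -/
theorem stmt3 (α : ℝ) (hα1 : 1 < α) (hα2 : α < 2) :
    (∫⁻ u in Set.Ioi (0 : ℝ), ∫⁻ v in Set.Ioi (0 : ℝ), ∫⁻ w in Set.Ioi (0 : ℝ),
      ENNReal.ofReal (min (u * v) 1 * min (v * w) 1 * min (u * w) 1 *
        u ^ (-α - 1) * v ^ (-α - 1) * w ^ (-α - 1))) < ⊤ := by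
  set h : ℝ → ℝ≥0∞ := fun t => ENNReal.ofReal (logKernel α t)
  have hh : Measurable h := by unfold h logKernel; fun_prop
  calc _ = ∫⁻ x, ∫⁻ y, ∫⁻ z, h (x + y) * h (y + z) * h (x + z) := by
        rw [lintegral_Ioi_lintegral_Ioi_lintegral_Ioi_eq]
        refine lintegral_congr fun x => lintegral_congr fun y => lintegral_congr fun z => ?_
        rw [← ENNReal.ofReal_mul (exp_pos _).le, exp_add_add_mul_integrand_eq_logKernel,
          ENNReal.ofReal_mul (by unfold logKernel; positivity),
          ENNReal.ofReal_mul (by unfold logKernel; positivity)]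
    _ = 2⁻¹ * (∫⁻ t, h t) ^ 3 := lintegral_lintegral_lintegral_mul_add h hh
    _ < ⊤ := ENNReal.mul_lt_top (by norm_num)
        (ENNReal.pow_lt_top (lintegral_ofReal_logKernel_lt_top (by linarith) hα2))
end

section
/- Let F be a continuous distribution function on [0,∞), W_1,...,W_n i.i.d. with distribution F, and F_n the empirical CDF. Let b(n) > 0, c > 0. Then P( sup_{x ≥ b(n)} (1 − F_n(x)) > c/n ) ≤ exp(n·(1−F(b(n)))) · (n(1−F(b(n))))^{⌈c⌉}. -/
/-!
If the empirical survival function `1 - F_n(x)` exceeds `c/n` at some `x ≥ b`, then more than `c`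
of the `W_i`, hence at least `k = ⌈c⌉` of them, exceed `b`. A union bound over the `k`-subsets of
indices and independence give probability at most `(n choose k) p^k ≤ (n p)^k ≤ e^{n p} (n p)^k`,
where `p = 1 - F(b)`.
-/

open MeasureTheory ProbabilityTheory Real Finset

theorem measure_le_card_filter_mem_le_choose_mul_pow {ι Ω β : Type*} [Fintype ι]
    [MeasurableSpace Ω] [MeasurableSpace β] {μ : Measure Ω} {X : ι → Ω → β}
    (hX : iIndepFun X μ) {B : Set β} [DecidablePred (· ∈ B)] (hB : MeasurableSet B)
    {q : ENNReal} (hq : ∀ i, μ (X i ⁻¹' B) ≤ q) (k : ℕ) :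
    μ {ω | k ≤ #{i | X i ω ∈ B}} ≤ (Fintype.card ι).choose k * q ^ k := by
  have hcover : {ω | k ≤ #{i | X i ω ∈ B}} ⊆
      ⋃ S ∈ powersetCard k (univ : Finset ι), ⋂ i ∈ S, X i ⁻¹' B := by
    intro ω hω
    obtain ⟨S, hS, hSk⟩ := exists_subset_card_eq hω
    refine Set.mem_biUnion (mem_powersetCard.mpr ⟨subset_univ S, hSk⟩) ?_
    exact Set.mem_iInter₂.mpr fun i hi => (mem_filter.mp (hS hi)).2
  have hterm : ∀ S ∈ powersetCard k (univ : Finset ι), μ (⋂ i ∈ S, X i ⁻¹' B) ≤ q ^ k := by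
    intro S hS
    rw [hX.meas_biInter fun i _ => ⟨B, hB, rfl⟩, ← (mem_powersetCard.mp hS).2]
    exact prod_le_pow_card S _ q fun i _ => hq i
  calc μ {ω | k ≤ #{i | X i ω ∈ B}}
      ≤ ∑ S ∈ powersetCard k (univ : Finset ι), μ (⋂ i ∈ S, X i ⁻¹' B) :=
        (measure_mono hcover).trans (measure_biUnion_finset_le _ _)
    _ ≤ ∑ S ∈ powersetCard k (univ : Finset ι), q ^ k := sum_le_sum hterm
    _ = (Fintype.card ι).choose k * q ^ k := by
        rw [sum_const, card_powersetCard, card_univ, nsmul_eq_mul]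

theorem ceil_le_card_lt_of_lt_one_sub_card_le_div {ι : Type*} [Fintype ι]
    (hι : 0 < Fintype.card ι) (f : ι → ℝ) {b x c : ℝ} (hbx : b ≤ x)
    (h : c / Fintype.card ι < 1 - (#{i | f i ≤ x} : ℝ) / Fintype.card ι) :
    ⌈c⌉₊ ≤ #{i | b < f i} := by
  have hsplit := card_filter_add_card_filter_not (s := univ) fun i => f i ≤ x
  have hmono : #{i | ¬f i ≤ x} ≤ #{i | b < f i} :=
    card_le_card fun i hi => by
      simp only [mem_filter, mem_univ, true_and, not_le] at hi ⊢
      exact hbx.trans_lt hi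
  have hc : c < Fintype.card ι - (#{i | f i ≤ x} : ℝ) := by
    have hιR : (0 : ℝ) < Fintype.card ι := by exact_mod_cast hι
    rw [div_lt_iff₀ hιR, sub_mul, div_mul_cancel₀ _ hιR.ne'] at h
    linarith
  rw [card_univ] at hsplit
  have hsplitR : (#{i | f i ≤ x} : ℝ) + #{i | ¬f i ≤ x} = Fintype.card ι := by
    exact_mod_cast hsplit
  have hmonoR : (#{i | ¬f i ≤ x} : ℝ) ≤ #{i | b < f i} := by exact_mod_cast hmono
  exact Nat.ceil_le.mpr (by linarith)

theorem measure_preimage_Ioi_eq_ofReal_one_sub {Ω : Type*} [MeasurableSpace Ω]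
    {μ : Measure Ω} [IsProbabilityMeasure μ] {X : Ω → ℝ} (hX : Measurable X) (b : ℝ) :
    μ (X ⁻¹' Set.Ioi b) = ENNReal.ofReal (1 - (μ {ω | X ω ≤ b}).toReal) := by
  have hcompl : X ⁻¹' Set.Ioi b = {ω | X ω ≤ b}ᶜ := by ext; simp
  have hle : MeasurableSet {ω | X ω ≤ b} := hX measurableSet_Iic
  rw [hcompl, prob_compl_eq_one_sub hle, ENNReal.ofReal_sub _ ENNReal.toReal_nonneg,
    ENNReal.ofReal_one, ENNReal.ofReal_toReal (measure_ne_top _ _)]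

theorem choose_mul_ofReal_pow_le_exp_mul_pow (n k : ℕ) {p : ℝ} (hp : 0 ≤ p) :
    (n.choose k : ENNReal) * ENNReal.ofReal p ^ k ≤ ENNReal.ofReal (exp (n * p) * (n * p) ^ k) := by
  have hnp : 0 ≤ (n : ℝ) * p := by positivity
  rw [← ENNReal.ofReal_natCast, ← ENNReal.ofReal_pow hp, ← ENNReal.ofReal_mul (by positivity)]
  refine ENNReal.ofReal_le_ofReal ?_
  calc (n.choose k : ℝ) * p ^ k ≤ (n : ℝ) ^ k * p ^ k := by
        gcongr; exact_mod_cast Nat.choose_le_pow n k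
    _ = 1 * (n * p) ^ k := by ring
    _ ≤ exp (n * p) * (n * p) ^ k := by gcongr; exact one_le_exp hnp

theorem stmt9_general {Ω : Type*} [MeasureSpace Ω] [IsProbabilityMeasure (ℙ : Measure Ω)]
    (n : ℕ) (hn : 0 < n) (W : Fin n → Ω → ℝ)
    (hmeas : ∀ i, Measurable (W i))
    (hindep : iIndepFun W ℙ)
    (F : ℝ → ℝ)
    (hFdist : ∀ i x, (ℙ {ω | W i ω ≤ x}).toReal = F x)
    (b c : ℝ) :
    ℙ {ω | ∃ x ≥ b,
        c / n < 1 - ((Finset.univ.filter (fun i : Fin n => W i ω ≤ x)).card : ℝ) / n}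
      ≤ ENNReal.ofReal (Real.exp (n * (1 - F b)) * (n * (1 - F b)) ^ (⌈c⌉₊ : ℕ)) := by
  have htail : ∀ i, ℙ (W i ⁻¹' Set.Ioi b) = ENNReal.ofReal (1 - F b) := fun i => by
    rw [measure_preimage_Ioi_eq_ofReal_one_sub (hmeas i), hFdist]
  have hFb : F b ≤ 1 := hFdist ⟨0, hn⟩ b ▸ measureReal_le_one
  calc _ ≤ ℙ {ω | ⌈c⌉₊ ≤ (Finset.univ.filter fun i => W i ω ∈ Set.Ioi b).card} :=
        measure_mono <| by
          rintro ω ⟨x, hbx, hx⟩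
          exact ceil_le_card_lt_of_lt_one_sub_card_le_div (by simpa using hn) (W · ω) hbx
            (by simpa using hx)
    _ ≤ n.choose ⌈c⌉₊ * ENNReal.ofReal (1 - F b) ^ ⌈c⌉₊ := by
        simpa using measure_le_card_filter_mem_le_choose_mul_pow hindep measurableSet_Ioi
          (fun i => (htail i).le) ⌈c⌉₊
    _ ≤ _ := choose_mul_ofReal_pow_le_exp_mul_pow n _ (by linarith)

/-- Tail bound for the empirical distribution function far in the tail:
`P(sup_{x ≥ b} (1 - F_n(x)) > c/n) ≤ exp(n (1-F(b))) (n(1-F(b)))^⌈c⌉`. -/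
theorem stmt9 {Ω : Type*} [MeasureSpace Ω] [IsProbabilityMeasure (ℙ : Measure Ω)]
    (n : ℕ) (hn : 0 < n) (W : Fin n → Ω → ℝ)
    (hmeas : ∀ i, Measurable (W i))
    (hindep : iIndepFun W ℙ)
    (F : ℝ → ℝ) (hF : Continuous F) (hFsupp : ∀ x < (0 : ℝ), F x = 0)
    (hFdist : ∀ i x, (ℙ {ω | W i ω ≤ x}).toReal = F x)
    (b c : ℝ) (hb : 0 < b) (hc : 0 < c) :
    ℙ {ω | ∃ x ≥ b,
        c / n < 1 - ((Finset.univ.filter (fun i : Fin n => W i ω ≤ x)).card : ℝ) / n}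
      ≤ ENNReal.ofReal (Real.exp (n * (1 - F b)) * (n * (1 - F b)) ^ (⌈c⌉₊ : ℕ)) :=
  stmt9_general n hn W hmeas hindep F hFdist b c
end

section
/- Let α ∈ (1,2), μ > 0, and suppose w_i ≥ w_j ≥ 1 with w_i·w_j ≤ μn. Then the function (w_i, w_j) ↦ (μn)^{−α}·( w_i^{α−1} w_j/((2−α)(α−1)) + w_j^{α}/α ), restricted to the region { (w_i,w_j) : w_i ≥ w_j ≥ 1, w_i w_j ≤ μn }, attains its maximum at w_i = w_j = √(μn). -/
open Real

/-- For `α ∈ (1,2)`, the function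
`(w_i, w_j) ↦ (μn)^{-α} (w_i^{α-1} w_j/((2-α)(α-1)) + w_j^α/α)` on the region
`{w_i ≥ w_j ≥ 1, w_i w_j ≤ μn}` attains its maximum at `w_i = w_j = √(μn)`. -/
theorem stmt18 (α μ : ℝ) (n : ℕ) (hα1 : 1 < α) (hα2 : α < 2) (hμ : 0 < μ)
    (hn : 1 ≤ μ * n) :
    (1 ≤ Real.sqrt (μ * n) ∧ Real.sqrt (μ * n) * Real.sqrt (μ * n) ≤ μ * n) ∧
    ∀ wi wj : ℝ, 1 ≤ wj → wj ≤ wi → wi * wj ≤ μ * n →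
      (μ * n) ^ (-α) * (wi ^ (α - 1) * wj / ((2 - α) * (α - 1)) + wj ^ α / α)
        ≤ (μ * n) ^ (-α) *
            (Real.sqrt (μ * n) ^ (α - 1) * Real.sqrt (μ * n) / ((2 - α) * (α - 1))
              + Real.sqrt (μ * n) ^ α / α) := by
  have h0 : (0:ℝ) < μ * n := lt_of_lt_of_le one_pos hn
  set s := Real.sqrt (μ * n) with hs
  have hs2 : s * s = μ * n := Real.mul_self_sqrt h0.le
  have hs1 : 1 ≤ s := by
    nlinarith [Real.sqrt_nonneg (μ * n)]
  have hs0 : 0 < s := lt_of_lt_of_le one_pos hs1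
  refine ⟨⟨hs1, hs2.le⟩, ?_⟩
  intro wi wj hwj hij hmn
  have hwj0 : 0 < wj := lt_of_lt_of_le one_pos hwj
  have hwi0 : 0 < wi := lt_of_lt_of_le hwj0 hij
  have hwjs : wj ≤ s := by nlinarith
  -- key inequality for the first term
  have hA : wi ^ (α - 1) * wj ≤ s ^ (α - 1) * s := by
    have hfac : wi ^ (α - 1) * wj = (wi * wj) ^ (α - 1) * wj ^ (2 - α) := by
      rw [Real.mul_rpow hwi0.le hwj0.le, mul_assoc,
        ← Real.rpow_add hwj0]
      norm_num
    have hfac2 : s ^ (α - 1) * s = (s * s) ^ (α - 1) * s ^ (2 - α) := by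
      rw [Real.mul_rpow hs0.le hs0.le, mul_assoc,
        ← Real.rpow_add hs0]
      norm_num
    rw [hfac, hfac2, hs2]
    have h1 : (wi * wj) ^ (α - 1) ≤ (μ * n) ^ (α - 1) :=
      Real.rpow_le_rpow (by positivity) hmn (by linarith)
    have h2 : wj ^ (2 - α) ≤ s ^ (2 - α) :=
      Real.rpow_le_rpow hwj0.le hwjs (by linarith)
    exact mul_le_mul h1 h2 (by positivity) (by positivity)
  have hB : wj ^ α ≤ s ^ α := Real.rpow_le_rpow hwj0.le hwjs (by linarith)
  have hC : (0:ℝ) < (2 - α) * (α - 1) := by nlinarith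
  have hα0 : (0:ℝ) < α := by linarith
  have hpow : (0:ℝ) ≤ (μ * n) ^ (-α) := by positivity
  apply mul_le_mul_of_nonneg_left _ hpow
  exact add_le_add (div_le_div_of_nonneg_right hA hC.le) (div_le_div_of_nonneg_right hB hα0.le)
end
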